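/- Let a ∈ ℤ and let t ∈ ℚ satisfy t² + t·a + 24t - 42a + 108 = 0. Then t ∈ ℤ and (t - 42)(t + a + 66) = -2880. -/

import Mathlib

open Polynomial

theorem isIntegral_of_sq_add_mul_add_eq_zero {R A : Type*} [CommRing R] [CommRing A]
    [Algebra R A] {x : A} (b c : R) (h : x ^ 2 + algebraMap R A b * x + algebraMap R A c = 0) :
    IsIntegral R x := by
  refine ⟨X ^ 2 + C b * X + C c, by monicity!, ?_⟩
  simpa [eval₂_add, eval₂_mul, eval₂_pow] using h

theorem exists_intCast_eq_of_sq_add_mul_add_eq_zero {t : ℚ} (b c : ℤ)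
    (h : t ^ 2 + b * t + c = 0) : ∃ n : ℤ, t = n := by
  have hint : IsIntegral ℤ t := isIntegral_of_sq_add_mul_add_eq_zero b c <| by
    simpa only [algebraMap_int_eq, eq_intCast] using h
  obtain ⟨n, hn⟩ := IsIntegrallyClosed.isIntegral_iff.mp hint
  exact ⟨n, hn.symm⟩

/-- Diophantine reduction for the indicial root `α = -s/24 - 1/20` of (♭_s):
if `t ∈ ℚ` satisfies the monic integer quadratic `t² + t·a + 24t - 42a + 108 = 0`
with `a ∈ ℤ`, then `t` is an integer and `(t - 42)(t + a + 66) = -2880`. -/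
theorem diophantine_reduction_case1 (a : ℤ) (t : ℚ)
    (h : t^2 + t * a + 24 * t - 42 * a + 108 = 0) :
    (∃ n : ℤ, t = n) ∧ (t - 42) * (t + a + 66) = -2880 := by
  refine ⟨exists_intCast_eq_of_sq_add_mul_add_eq_zero (a + 24) (108 - 42 * a) ?_, ?_⟩
  · push_cast
    linear_combination h
  · linear_combination h
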